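/- arXiv:2508.18305 — 6 statements merged into one kernel-verified Lean document; each statement's English description precedes it below -/
import Mathlib

section
/- Let a, b be coprime positive integers with a > 1, f(z) = a*z + b, and let p be a prime dividing both z and a - 1. Then p divides f^p(z), and consequently f^p(z) is composite. -/
def IsComposite (m : ℕ) : Prop :=
  ∃ x y : ℕ, m = x * y ∧ 1 < x ∧ x < m ∧ 1 < y ∧ y < m

theorem case_p_dvd_a_sub_one (a b z p : ℕ) (ha : 1 < a) (hb : 0 < b) (hz : 0 < z)
    (hab : Nat.Coprime a b) (hp : p.Prime) (hpz : p ∣ z) (hpa : p ∣ a - 1) :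
    p ∣ (fun x => a * x + b)^[p] z ∧ IsComposite ((fun x => a * x + b)^[p] z) := by
  have ha1 : ((a : ZMod p)) = 1 := by
    have : ((a - 1 : ℕ) : ZMod p) = 0 := (ZMod.natCast_eq_zero_iff _ _).mpr hpa
    have h1 : (1:ℕ) ≤ a := ha.le
    have := Nat.cast_sub h1 (R := ZMod p) ▸ this
    linear_combination this
  have key : ∀ n : ℕ, (((fun x => a * x + b)^[n] z : ℕ) : ZMod p) = (z : ZMod p) + n * b := by
    intro n
    induction n with
    | zero => simp
    | succ n ih =>
      rw [Function.iterate_succ_apply']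
      push_cast
      rw [ih, ha1]
      ring
  have hdvd : p ∣ (fun x => a * x + b)^[p] z := by
    rw [← ZMod.natCast_eq_zero_iff]
    rw [key p]
    have hz0 : ((z : ℕ) : ZMod p) = 0 := (ZMod.natCast_eq_zero_iff _ _).mpr hpz
    simp [hz0, ZMod.natCast_self]
  refine ⟨hdvd, ?_⟩
  have grow : ∀ n : ℕ, n + z ≤ (fun x => a * x + b)^[n] z := by
    intro n
    induction n with
    | zero => simp
    | succ n ih =>
      rw [Function.iterate_succ_apply']
      show _ ≤ a * _ + b
      have : (fun x => a * x + b)^[n] z ≤ a * (fun x => a * x + b)^[n] z :=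
        Nat.le_mul_of_pos_left _ (by omega)
      omega
  set m := (fun x => a * x + b)^[p] z with hm
  have hpm : p < m := lt_of_lt_of_le (by omega) (grow p)
  obtain ⟨y, hy⟩ := hdvd
  have hp2 : 2 ≤ p := hp.two_le
  have hy1 : 1 < y := by nlinarith
  refine ⟨p, y, hy, by omega, hpm, hy1, ?_⟩
  nlinarith
end

section
/- Let a, b be coprime positive integers with a > 1 and f(z) = a*z + b. For every positive integer z, there exists n < a*z + b + 1 such that f^n(z) is composite. -/
theorem rooted_cunningham_linear_bound (a b : ℕ) (ha : 1 < a) (hb : 0 < b)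
    (hab : Nat.Coprime a b) :
    ∀ z : ℕ, 0 < z →
      ∃ n : ℕ, 0 < n ∧ n < a * z + b + 1 ∧
        IsComposite ((fun x => a * x + b)^[n] z) := by
  intro z hz
  set f : ℕ → ℕ := fun x => a * x + b with hf
  obtain ⟨w, hw⟩ : ∃ w : ℕ, a * z + b = w := ⟨_, rfl⟩
  have hwz : f z = w := hw
  rw [hw]
  have haz : 2 ≤ a * z := Nat.mul_le_mul ha hz
  have hw3 : 3 ≤ w := by omega
  have haw : a < w := by
    have : a * 1 ≤ a * z := Nat.mul_le_mul_left a hz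
    omega
  have hbw : b < w := by omega
  have hle : ∀ (k : ℕ) (x : ℕ), x ≤ f^[k] x := by
    intro k
    induction k with
    | zero => simp
    | succ k ih =>
      intro x
      rw [Function.iterate_succ_apply']
      calc x ≤ f^[k] x := ih x
        _ ≤ f (f^[k] x) := by
            show f^[k] x ≤ a * f^[k] x + b
            have : 1 * f^[k] x ≤ a * f^[k] x := Nat.mul_le_mul_right _ (by omega)
            omega
  have hfgt : ∀ x : ℕ, 0 < x → x < f x := by
    intro x hx
    show x < a * x + b
    have : 2 * x ≤ a * x := Nat.mul_le_mul_right x ha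
    omega
  by_cases hp : w.Prime
  · -- prime case
    haveI : Fact w.Prime := ⟨hp⟩
    haveI : NeZero w := ⟨by omega⟩
    have hvala : (a : ZMod w).val = a := ZMod.val_natCast_of_lt haw
    have hA0 : (a : ZMod w) ≠ 0 := by
      intro h
      rw [h] at hvala
      simp at hvala
      omega
    have hA1 : (a : ZMod w) ≠ 1 := by
      intro h
      rw [h, ZMod.val_one] at hvala
      omega
    have hB0 : (b : ZMod w) ≠ 0 := by
      intro h
      have : w ∣ b := (ZMod.natCast_eq_zero_iff b w).mp h
      have := Nat.le_of_dvd hb this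
      omega
    set g : ZMod w → ZMod w := fun x => (a : ZMod w) * x + (b : ZMod w) with hg
    have hginj : Function.Injective g := by
      intro x y hxy
      simp only [hg] at hxy
      exact mul_left_cancel₀ hA0 (add_right_cancel hxy)
    have h1A : (1 - (a : ZMod w)) ≠ 0 := by
      intro h
      apply hA1
      have : (1 : ZMod w) = (a : ZMod w) := by linear_combination h
      exact this.symm
    set x0 : ZMod w := (b : ZMod w) * (1 - (a : ZMod w))⁻¹ with hx0def
    have hx0fix : g x0 = x0 := by
      simp only [hg, hx0def]
      field_simp
      ring
    have hx00 : x0 ≠ 0 := by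
      simp only [hx0def]
      exact mul_ne_zero hB0 (inv_ne_zero h1A)
    -- pigeonhole
    have hmaps : ∀ i ∈ Finset.range w, g^[i] 0 ∈ Finset.univ.erase x0 := by
      intro i _
      refine Finset.mem_erase.mpr ⟨?_, Finset.mem_univ _⟩
      intro h
      have h2 : g^[i] x0 = x0 := Function.iterate_fixed hx0fix i
      have := Function.Injective.iterate hginj i (h.trans h2.symm)
      exact hx00 this.symm
    have hcard : (Finset.univ.erase x0).card < (Finset.range w).card := by
      rw [Finset.card_erase_of_mem (Finset.mem_univ _), Finset.card_range,
        Finset.card_univ, ZMod.card]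
      omega
    obtain ⟨i, hi, j, hj, hij, heq⟩ :=
      Finset.exists_ne_map_eq_of_card_lt_of_maps_to hcard hmaps
    simp only [Finset.mem_range] at hi hj
    obtain ⟨i, j, hlt, hjw, heq⟩ :
        ∃ i j : ℕ, i < j ∧ j < w ∧ g^[j] (0 : ZMod w) = g^[i] 0 := by
      rcases Nat.lt_or_ge i j with h | h
      · exact ⟨i, j, h, hj, heq.symm⟩
      · exact ⟨j, i, lt_of_le_of_ne h (Ne.symm hij), hi, heq⟩
    set p := j - i with hpdef
    have hp0 : 0 < p := by omega
    have hperiod : g^[p] (0 : ZMod w) = 0 := by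
      have h1 : g^[i] (g^[p] (0 : ZMod w)) = g^[i] 0 := by
        rw [← Function.iterate_add_apply]
        have hip : i + p = j := by omega
        rw [hip, heq]
      exact Function.Injective.iterate hginj i h1
    have hcast : ∀ (k : ℕ) (x : ℕ), ((f^[k] x : ℕ) : ZMod w) = g^[k] (x : ZMod w) := by
      intro k
      induction k with
      | zero => simp
      | succ k ih =>
        intro x
        rw [Function.iterate_succ_apply, Function.iterate_succ_apply]
        rw [show f x = a * x + b from rfl]
        rw [ih (a * x + b)]
        congr 1
        push_cast
        rfl
    have hdvd : w ∣ f^[p] w := by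
      have h0 : ((f^[p] w : ℕ) : ZMod w) = 0 := by
        rw [hcast, ZMod.natCast_self, hperiod]
      exact (ZMod.natCast_eq_zero_iff _ _).mp h0
    have hgt : w < f^[p] w := by
      obtain ⟨q, hq⟩ : ∃ q, p = q + 1 := ⟨p - 1, by omega⟩
      rw [hq, Function.iterate_succ_apply]
      exact lt_of_lt_of_le (hfgt w (by omega)) (hle q (f w))
    refine ⟨p + 1, by omega, by omega, ?_⟩
    have hfn : f^[p + 1] z = f^[p] w := by
      rw [Function.iterate_succ_apply, hwz]
    obtain ⟨y, hy⟩ := hdvd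
    have hy1 : 1 < y := by
      have h1 : w * 1 < w * y := by omega
      exact Nat.lt_of_mul_lt_mul_left h1
    refine ⟨w, y, ?_, by omega, by omega, hy1, ?_⟩
    · rw [hfn, hy]
    · have : 2 * y ≤ w * y := Nat.mul_le_mul_right y (by omega)
      omega
  · -- composite case: n = 1
    refine ⟨1, one_pos, by omega, ?_⟩
    have hf1 : f^[1] z = w := by simpa using hwz
    rw [hf1]
    have hmp : (w.minFac).Prime := Nat.minFac_prime (by omega)
    have hm1 : 1 < w.minFac := hmp.one_lt
    have hmlt : w.minFac < w := by
      rcases lt_or_eq_of_le (Nat.minFac_le (by omega : 0 < w)) with h | h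
      · exact h
      · exact absurd (h ▸ hmp) hp
    obtain ⟨y, hy⟩ := Nat.minFac_dvd w
    have hy1 : 1 < y := by
      rcases Nat.lt_or_ge y 2 with h | h
      · interval_cases y <;> omega
      · omega
    have hyw : y < w := by
      have : 2 * y ≤ w.minFac * y := Nat.mul_le_mul_right y hm1
      omega
    exact ⟨w.minFac, y, hy, hm1, hmlt, hy1, hyw⟩
end

section
/- Let a, b, z be positive integers with gcd(a,b) = 1, a > 1, and suppose a has exactly k distinct prime factors. Define s_n = z - b*(a^n - 1)/(a - 1). If z > b + a*b + a^2*b + ... + a^{k+1}*b, then there exists an index i with 1 ≤ i ≤ k+1 and a prime p such that p divides s_i and p does not divide a. -/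
/-- The sequence `s n = z - b * (a^n - 1)/(a - 1)`. -/
def s (a b z : ℕ) (n : ℕ) : ℤ :=
  (z : ℤ) - (b : ℤ) * (((a : ℤ) ^ n - 1) / ((a : ℤ) - 1))

theorem exists_new_prime_divisor (a b z k : ℕ) (ha : 1 < a) (hb : 0 < b) (hz : 0 < z)
    (hab : Nat.gcd a b = 1) (hk : a.primeFactors.card = k)
    (hzbig : (∑ j ∈ Finset.range (k + 2), a ^ j * b) < z) :
    ∃ i : ℕ, ∃ p : ℕ, 1 ≤ i ∧ i ≤ k + 1 ∧ p.Prime ∧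
      (p : ℤ) ∣ s a b z i ∧ ¬ p ∣ a := by
  by_contra hcon
  push_neg at hcon
  set S : ℕ → ℕ := fun i => ∑ j ∈ Finset.range i, a ^ j with hSdef
  have ha0 : a ≠ 0 := by omega
  -- s in terms of S
  have hsS : ∀ i, s a b z i = (z : ℤ) - (b : ℤ) * (S i : ℤ) := by
    intro i
    have hne : (a : ℤ) - 1 ≠ 0 := by
      have : (1:ℤ) < (a:ℤ) := by exact_mod_cast ha
      omega
    have hg : ((a:ℤ)^i - 1) = ((a:ℤ) - 1) * ∑ j ∈ Finset.range i, (a:ℤ)^j := by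
      rw [← geom_sum_mul]; ring
    have hdiv : ((a:ℤ)^i - 1) / ((a:ℤ) - 1) = ∑ j ∈ Finset.range i, (a:ℤ)^j := by
      rw [hg, Int.mul_ediv_cancel_left _ hne]
    rw [s, hdiv, hSdef]; push_cast; ring
  -- size bound
  have hmono : ∀ i, i ≤ k + 1 → b * S i + a ^ i < z := by
    intro i hi
    have h1 : S i + a ^ i ≤ S (k + 2) := by
      have hle : S (i+1) ≤ S (k+2) :=
        Finset.sum_le_sum_of_subset (Finset.range_subset_range.mpr (by omega))
      have h2 : S (i+1) = S i + a ^ i := Finset.sum_range_succ _ _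
      omega
    have h2 : S (k+2) * b < z := by
      rw [hSdef]
      calc (∑ j ∈ Finset.range (k+2), a ^ j) * b
          = ∑ j ∈ Finset.range (k + 2), a ^ j * b := Finset.sum_mul _ _ _
        _ < z := hzbig
    have h3 : b * S i + a ^ i ≤ b * (S i + a ^ i) := by
      have : a ^ i ≤ b * a ^ i := Nat.le_mul_of_pos_left _ hb
      rw [Nat.mul_add]; omega
    have h4 : b * (S i + a ^ i) ≤ S (k+2) * b := by
      rw [Nat.mul_comm (S (k+2)) b]
      exact Nat.mul_le_mul_left b h1
    omega
  set t : ℕ → ℕ := fun i => z - b * S i with htdef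
  have hapos : ∀ i : ℕ, 0 < a ^ i := fun i => pow_pos (by omega) i
  have ht_big : ∀ i, i ≤ k + 1 → a ^ i < t i := by
    intro i hi
    have := hmono i hi
    simp only [htdef]
    omega
  have ht_eq : ∀ i, i ≤ k + 1 → (t i : ℤ) = s a b z i := by
    intro i hi
    have h1 := hmono i hi
    rw [hsS]
    simp only [htdef]
    have : b * S i ≤ z := by omega
    push_cast [Nat.cast_sub this]
    ring
  -- pairwise lemma
  have pair : ∀ p : ℕ, p.Prime → p ∣ a → ∀ i j : ℕ, 1 ≤ i → i < j → j ≤ k + 1 →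
      p ^ (i * a.factorization p + 1) ∣ t i →
      p ^ (j * a.factorization p + 1) ∣ t j → False := by
    intro p hp hpa i j hi hij hj hdi hdj
    have hdj' : p ^ (i * a.factorization p + 1) ∣ t j :=
      dvd_trans (pow_dvd_pow p
        (Nat.add_le_add_right (Nat.mul_le_mul_right _ (le_of_lt hij)) 1)) hdj
    -- t i = t j + b * (S j - S i)
    have hSle : S i ≤ S j :=
      Finset.sum_le_sum_of_subset (Finset.range_subset_range.mpr (le_of_lt hij))
    have hmul : b * S j = b * S i + b * (S j - S i) := by
      rw [← Nat.mul_add, Nat.add_sub_cancel' hSle]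
    have hzi := hmono i (by omega)
    have hzj := hmono j hj
    have hteq : t i = t j + b * (S j - S i) := by
      simp only [htdef]; omega
    have hX : p ^ (i * a.factorization p + 1) ∣ b * (S j - S i) := by
      have : b * (S j - S i) = t i - t j := by omega
      rw [this]
      exact Nat.dvd_sub hdi hdj'
    -- S j - S i = a^i * D
    have hSij : S j - S i = a ^ i * ∑ m ∈ Finset.range (j - i), a ^ m := by
      have h1 : S j = S i + ∑ m ∈ Finset.Ico i j, a ^ m := by
        rw [hSdef]
        exact (Finset.sum_range_add_sum_Ico _ (le_of_lt hij)).symm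
      rw [h1, Nat.add_sub_cancel_left, Finset.sum_Ico_eq_sum_range, Finset.mul_sum]
      apply Finset.sum_congr rfl
      intro m _
      rw [← pow_add]
    rw [hSij] at hX
    -- p doesn't divide b
    have hpb : Nat.Coprime p b := Nat.Coprime.coprime_dvd_left hpa hab
    have hX2 : p ^ (i * a.factorization p + 1) ∣ a ^ i * ∑ m ∈ Finset.range (j - i), a ^ m :=
      (Nat.Coprime.pow_left _ hpb).dvd_of_dvd_mul_left hX
    -- p doesn't divide the geometric sum
    have hpD : ¬ p ∣ ∑ m ∈ Finset.range (j - i), a ^ m := by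
      obtain ⟨n, hn⟩ : ∃ n, j - i = n + 1 := ⟨j - i - 1, by omega⟩
      rw [hn, Finset.sum_range_succ']
      intro hdvd
      have h1 : p ∣ ∑ m ∈ Finset.range n, a ^ (m + 1) :=
        Finset.dvd_sum (fun m _ => dvd_trans hpa (dvd_pow_self a (Nat.succ_ne_zero m)))
      have h2 : p ∣ a ^ 0 := (Nat.dvd_add_right h1).mp hdvd
      simp at h2
      exact hp.one_lt.ne' h2
    have hX3 : p ^ (i * a.factorization p + 1) ∣ a ^ i := by
      have hc : Nat.Coprime (p ^ (i * a.factorization p + 1)) (∑ m ∈ Finset.range (j - i), a ^ m) :=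
        Nat.Coprime.pow_left _ ((Nat.Prime.coprime_iff_not_dvd hp).mpr hpD)
      exact hc.dvd_of_dvd_mul_right hX2
    have hle : i * a.factorization p + 1 ≤ (a ^ i).factorization p :=
      (Nat.Prime.pow_dvd_iff_le_factorization hp (pow_ne_zero _ ha0)).mp hX3
    rw [Nat.factorization_pow] at hle
    simp only [Finsupp.smul_apply, smul_eq_mul] at hle
    exact Nat.not_succ_le_self _ hle
  -- per-index claim
  have key : ∀ i, 1 ≤ i → i ≤ k + 1 →
      ∃ p : ℕ, p.Prime ∧ p ∣ a ∧ p ^ (i * a.factorization p + 1) ∣ t i := by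
    intro i h1 h2
    have hti := ht_big i h2
    have hai := hapos i
    have ht0 : t i ≠ 0 := by omega
    have hndvd : ¬ t i ∣ a ^ i := by
      intro h
      have := Nat.le_of_dvd hai h
      omega
    rw [← Nat.factorization_le_iff_dvd ht0 (pow_ne_zero _ ha0)] at hndvd
    rw [Finsupp.le_def] at hndvd
    push_neg at hndvd
    obtain ⟨p, hp⟩ := hndvd
    rw [Nat.factorization_pow] at hp
    simp only [Finsupp.smul_apply, smul_eq_mul] at hp
    have hppr : p.Prime := by
      by_contra hnp
      rw [Nat.factorization_eq_zero_of_not_prime (t i) hnp] at hp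
      exact Nat.not_lt_zero _ hp
    have hpt : p ∣ t i :=
      Nat.dvd_of_factorization_pos (lt_of_le_of_lt (Nat.zero_le _) hp).ne'
    have hpa : p ∣ a := by
      apply hcon i p h1 h2 hppr
      rw [← ht_eq i h2]
      exact_mod_cast Int.natCast_dvd_natCast.mpr hpt
    refine ⟨p, hppr, hpa, ?_⟩
    rw [Nat.Prime.pow_dvd_iff_le_factorization hppr ht0]
    exact hp
  -- skolemize
  have hchoice : ∀ i, ∃ p : ℕ, 1 ≤ i → i ≤ k + 1 →
      p.Prime ∧ p ∣ a ∧ p ^ (i * a.factorization p + 1) ∣ t i := by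
    intro i
    by_cases h : 1 ≤ i ∧ i ≤ k + 1
    · obtain ⟨p, hp⟩ := key i h.1 h.2
      exact ⟨p, fun _ _ => hp⟩
    · exact ⟨2, fun h1 h2 => absurd ⟨h1, h2⟩ h⟩
  choose F hF using hchoice
  have hcard : a.primeFactors.card < (Finset.Icc 1 (k+1)).card := by
    rw [hk, Nat.card_Icc]; omega
  have hmaps : ∀ i ∈ Finset.Icc 1 (k+1), F i ∈ a.primeFactors := by
    intro i hi
    rw [Finset.mem_Icc] at hi
    obtain ⟨h1, h2, _⟩ := hF i hi.1 hi.2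
    exact Nat.mem_primeFactors.mpr ⟨h1, h2, ha0⟩
  obtain ⟨i, hi, j, hj, hne, heq⟩ :=
    Finset.exists_ne_map_eq_of_card_lt_of_maps_to hcard hmaps
  rw [Finset.mem_Icc] at hi hj
  obtain ⟨hip, hia, hit⟩ := hF i hi.1 hi.2
  obtain ⟨hjp, hja, hjt⟩ := hF j hj.1 hj.2
  rcases hne.lt_or_gt with h | h
  · rw [← heq] at hjt
    exact pair (F i) hip hia i j hi.1 h hj.2 hit hjt
  · rw [heq] at hit
    exact pair (F j) hjp hja j i hj.1 h hi.2 hjt hit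
end

section
/- Let a, b be positive integers with a > 1 and f(z) = a*z + b. Suppose p is a prime not dividing a and not dividing a - 1, and p divides s_i = z - b*(a^i - 1)/(a-1) for some i ≥ 1. Let r ∈ {1, ..., p-1} be the residue of -i modulo p - 1. Then p divides f^r(z). -/
lemma iterate_affine (a b z : ℕ) : ∀ r, (fun x => a * x + b)^[r] z
    = a ^ r * z + b * ∑ k ∈ Finset.range r, a ^ k := by
  intro r
  induction r with
  | zero => simp
  | succ n ih =>
    rw [Function.iterate_succ_apply', ih, Finset.sum_range_succ']
    simp only [pow_succ, pow_zero, ← Finset.sum_mul]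
    ring

theorem dvd_iterate_of_not_dvd_a_sub_one (a b z : ℕ) (ha : 1 < a) (hb : 0 < b)
    (hz : 0 < z) (p : ℕ) (hp : p.Prime) (hpa : ¬ p ∣ a) (hpa1 : ¬ p ∣ a - 1)
    (i : ℕ) (hi : 1 ≤ i) (hps : (p : ℤ) ∣ s a b z i)
    (r : ℕ) (hr1 : 1 ≤ r) (hr2 : r ≤ p - 1) (hres : (p - 1) ∣ r + i) :
    p ∣ (fun x => a * x + b)^[r] z := by
  haveI : Fact p.Prime := ⟨hp⟩
  -- rewrite the division in s as a geometric sum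
  have hane : (a : ℤ) - 1 ≠ 0 := by
    have : (1 : ℤ) < a := by exact_mod_cast ha
    omega
  have hdiv : ((a : ℤ) ^ i - 1) / ((a : ℤ) - 1) = ∑ k ∈ Finset.range i, (a : ℤ) ^ k := by
    have := geom_sum_mul (a : ℤ) i
    rw [← this, Int.mul_ediv_cancel _ hane]
  rw [s, hdiv] at hps
  -- pass to ZMod p
  rw [iterate_affine, ← ZMod.natCast_eq_zero_iff]
  push_cast
  -- key facts in ZMod p
  have haz : (a : ZMod p) ≠ 0 := by
    rw [Ne, ZMod.natCast_eq_zero_iff]; exact hpa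
  have ha1 : (a : ZMod p) - 1 ≠ 0 := by
    intro h
    apply hpa1
    rw [← ZMod.natCast_eq_zero_iff]
    push_cast [Nat.cast_sub ha.le]
    exact h
  have hz : (z : ZMod p) = b * ∑ k ∈ Finset.range i, (a : ZMod p) ^ k := by
    have := (ZMod.intCast_zmod_eq_zero_iff_dvd _ p).mpr hps
    push_cast at this
    linear_combination this
  have hfermat : (a : ZMod p) ^ (r + i) = 1 := by
    obtain ⟨m, hm⟩ := hres
    rw [hm, pow_mul, ZMod.pow_card_sub_one_eq_one haz, one_pow]
  have hsum : ∑ k ∈ Finset.range (r + i), (a : ZMod p) ^ k = 0 := by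
    have := geom_sum_mul (a : ZMod p) (r + i)
    rw [hfermat, sub_self] at this
    exact (mul_eq_zero.mp this).resolve_right ha1
  have hsplit : ∑ k ∈ Finset.range (r + i), (a : ZMod p) ^ k
      = (∑ k ∈ Finset.range r, (a : ZMod p) ^ k) + (a : ZMod p) ^ r * ∑ k ∈ Finset.range i, (a : ZMod p) ^ k := by
    rw [Finset.sum_range_add]
    congr 1
    rw [Finset.mul_sum]
    exact Finset.sum_congr rfl fun k _ => by rw [pow_add]
  rw [hz]
  linear_combination (b : ZMod p) * hsum - (b : ZMod p) * hsplit
end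

section
/- Let a, b be coprime positive integers with a > 1, let k be the number of distinct prime factors of a, and set M = b + a*b + a^2*b + ... + a^{k+1}*b. Then for every positive integer z > M, there exists n < z such that f^n(z) is composite, where f(z) = a*z + b. In particular, every rooted Cunningham chain with root z > M has length ℓ(z) < z. -/
namespace RCAux

def c (a b n : ℕ) : ℕ := ∑ j ∈ Finset.range n, a ^ j * b

lemma c_mono (a b : ℕ) {i j : ℕ} (h : i ≤ j) : c a b i ≤ c a b j :=
  Finset.sum_le_sum_of_subset (Finset.range_subset_range.mpr h)

lemma c_one (a b : ℕ) : c a b 1 = b := by simp [c]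

lemma c_succ (a b n : ℕ) : c a b (n + 1) = c a b n + a ^ n * b := by
  unfold c; exact Finset.sum_range_succ _ _

lemma iter_eq (a b : ℕ) : ∀ (n z : ℕ), (fun x => a * x + b)^[n] z = a ^ n * z + c a b n := by
  intro n
  induction n with
  | zero => intro z; simp [c]
  | succ n ih =>
    intro z
    rw [Function.iterate_succ_apply, ih, c_succ]
    ring

lemma c_add (a b u w : ℕ) : c a b (u + w) = a ^ u * c a b w + c a b u := by
  have h0 : (fun x => a * x + b)^[w] 0 = c a b w := by simpa using iter_eq a b w 0
  have h1 : (fun x => a * x + b)^[u + w] 0 = c a b (u + w) := by simpa using iter_eq a b (u + w) 0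
  have h2 := iter_eq a b u (c a b w)
  rw [Function.iterate_add_apply, h0, h2] at h1
  exact h1.symm

lemma c_dvd_mul (a b p T : ℕ) (h : p ∣ c a b T) : ∀ q, p ∣ c a b (q * T) := by
  intro q
  induction q with
  | zero => simp [c]
  | succ q ih =>
    have he : (q + 1) * T = q * T + T := by ring
    rw [he, c_add]
    exact dvd_add (Dvd.dvd.mul_left h _) ih

lemma exists_T (a b p : ℕ) (hp : p.Prime) (hpa : ¬ p ∣ a) :
    ∃ T, 1 ≤ T ∧ T ≤ p ∧ p ∣ c a b T := by
  have hmap : ∀ n ∈ Finset.range (p + 1), c a b n % p ∈ Finset.range p :=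
    fun n _ => Finset.mem_range.mpr (Nat.mod_lt _ hp.pos)
  obtain ⟨u, hu, w, hw, huw, heq⟩ :=
    Finset.exists_ne_map_eq_of_card_lt_of_maps_to (by simp) hmap
  rw [Finset.mem_range] at hu hw
  -- handle both orders
  suffices H : ∀ u w : ℕ, u < w → w < p + 1 → c a b u % p = c a b w % p →
      ∃ T, 1 ≤ T ∧ T ≤ p ∧ p ∣ c a b T by
    rcases lt_or_gt_of_ne huw with h | h
    · exact H u w h hw heq
    · exact H w u h hu heq.symm
  intro u w hlt hwp heq
  have hle : c a b u ≤ c a b w := c_mono a b hlt.le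
  have hdvd : p ∣ c a b w - c a b u := (Nat.modEq_iff_dvd' hle).mp heq
  have hw2 : c a b w = a ^ u * c a b (w - u) + c a b u := by
    have := c_add a b u (w - u)
    rwa [Nat.add_sub_cancel' hlt.le] at this
  have hsub : c a b w - c a b u = a ^ u * c a b (w - u) := by omega
  rw [hsub] at hdvd
  have hcop : Nat.Coprime p (a ^ u) :=
    Nat.Coprime.pow_right _ ((Nat.Prime.coprime_iff_not_dvd hp).mpr hpa)
  have : p ∣ c a b (w - u) := hcop.dvd_of_dvd_mul_left hdvd
  exact ⟨w - u, by omega, by omega, this⟩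

lemma isComposite_of (p m : ℕ) (hp : 1 < p) (hpm : p < m) (hd : p ∣ m) : IsComposite m := by
  obtain ⟨y, rfl⟩ := hd
  have hy0 : y ≠ 0 := by rintro rfl; simp at hpm
  have hy : 1 < y := by
    rcases Nat.lt_or_ge 1 y with h | h
    · exact h
    · interval_cases y
      · simp at hpm
      · simp at hpm
  refine ⟨p, y, rfl, hp, hpm, hy, ?_⟩
  exact (Nat.lt_mul_iff_one_lt_left (by omega)).mpr hp

end RCAux

open RCAux in
theorem rooted_cunningham_length_lt_root_large (a b : ℕ) (ha : 1 < a) (hb : 0 < b)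
    (hab : Nat.Coprime a b) :
    ∀ z : ℕ, (∑ j ∈ Finset.range (a.primeFactors.card + 2), a ^ j * b) < z →
      ∃ n : ℕ, 0 < n ∧ n < z ∧ IsComposite ((fun x => a * x + b)^[n] z) := by
  intro z hz
  set k := a.primeFactors.card with hk
  have hM : c a b (k + 2) < z := hz
  have hci : ∀ i ≤ k + 1, c a b i + a ^ i * b ≤ c a b (k + 2) := by
    intro i hi
    calc c a b i + a ^ i * b = c a b (i + 1) := (c_succ a b i).symm
    _ ≤ c a b (k + 2) := c_mono a b (by omega)
  have hpowpos : ∀ i : ℕ, 0 < a ^ i * b := fun i => Nat.mul_pos (pow_pos (by omega) i) hb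
  have hclt : ∀ i ≤ k + 1, c a b i < z := by
    intro i hi
    have := hci i hi
    have := hpowpos i
    omega
  by_cases h : ∃ i, 1 ≤ i ∧ i ≤ k + 1 ∧ ∃ p, p.Prime ∧ p ∣ (z - c a b i) ∧ ¬ p ∣ a
  · obtain ⟨i, hi1, hik, p, hp, hpd, hpa⟩ := h
    have hciz : c a b i < z := hclt i hik
    obtain ⟨T, hT1, hTp, hpc⟩ := exists_T a b p hp hpa
    set n := (i / T + 1) * T - i with hn
    have hdm := Nat.div_add_mod i T
    have hmlt : i % T < T := Nat.mod_lt _ (by omega)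
    have hexp : (i / T + 1) * T = T * (i / T) + T := by ring
    have hnfacts : n ≤ T ∧ 1 ≤ n ∧ n + i = (i / T + 1) * T := by omega
    have hpn : p ∣ c a b (n + i) := by
      rw [hnfacts.2.2]
      exact c_dvd_mul a b p T hpc (i / T + 1)
    have hiter : (fun x => a * x + b)^[n] z = a ^ n * (z - c a b i) + c a b (n + i) := by
      rw [iter_eq, c_add a b n i]
      have h2 : a ^ n * z = a ^ n * (z - c a b i) + a ^ n * c a b i := by
        rw [← Nat.mul_add, Nat.sub_add_cancel hciz.le]
      omega
    have hple : p ≤ z - c a b i := Nat.le_of_dvd (by omega) hpd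
    have hcb : 0 < c a b i := by
      have h1 := c_mono a b hi1
      rw [c_one] at h1
      omega
    have han : 2 ≤ a ^ n := by
      calc 2 ≤ a := ha
      _ ≤ a ^ n := Nat.le_self_pow (by omega) a
    refine ⟨n, by omega, by omega, ?_⟩
    apply isComposite_of p _ hp.one_lt ?_ ?_
    · rw [hiter]
      have h2 : 2 * (z - c a b i) ≤ a ^ n * (z - c a b i) := Nat.mul_le_mul_right _ han
      omega
    · rw [hiter]
      exact dvd_add (hpd.mul_left _) hpn
  · exfalso
    push_neg at h
    have key : ∀ i ∈ Finset.Icc 1 (k + 1), ∃ q, q.Prime ∧ q ∣ a ∧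
        i * a.factorization q + 1 ≤ (z - c a b i).factorization q := by
      intro i hi
      rw [Finset.mem_Icc] at hi
      have hgt : a ^ i < z - c a b i := by
        have h1 := hci i hi.2
        have h2 : a ^ i ≤ a ^ i * b := Nat.le_mul_of_pos_right _ hb
        omega
    
      have hapos : 0 < a ^ i := pow_pos (by omega) i
      have hm0 : z - c a b i ≠ 0 := by omega
      have hnd : ¬ (z - c a b i) ∣ a ^ i := fun hdvd =>
        absurd (Nat.le_of_dvd hapos hdvd) (by omega)
      have hnle : ¬ (z - c a b i).factorization ≤ (a ^ i).factorization := by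
        rw [Nat.factorization_le_iff_dvd hm0 (by positivity)]
        exact hnd
      rw [Finsupp.le_def] at hnle
      push_neg at hnle
      obtain ⟨q, hq⟩ := hnle
      have hq0 : (z - c a b i).factorization q ≠ 0 := by omega
      have hqmem : q ∈ (z - c a b i).primeFactors := by
        rw [← Nat.support_factorization]
        exact Finsupp.mem_support_iff.mpr hq0
      have hqprime : q.Prime := Nat.prime_of_mem_primeFactors hqmem
      have hqdvdm : q ∣ z - c a b i := Nat.dvd_of_mem_primeFactors hqmem
      have hqa : q ∣ a := h i hi.1 hi.2 q hqprime hqdvdm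
      refine ⟨q, hqprime, hqa, ?_⟩
      have hfp : (a ^ i).factorization q = i * a.factorization q := by
        rw [Nat.factorization_pow]; simp
      omega
    choose! Q hQp hQa hQv using key
    have hmaps : ∀ i ∈ Finset.Icc 1 (k + 1), Q i ∈ a.primeFactors := by
      intro i hi
      exact Nat.mem_primeFactors.mpr ⟨hQp i hi, hQa i hi, by omega⟩
    have hcard : a.primeFactors.card < (Finset.Icc 1 (k + 1)).card := by
      rw [Nat.card_Icc]; omega
    obtain ⟨i, hi, j, hj, hij, hQeq⟩ :=
      Finset.exists_ne_map_eq_of_card_lt_of_maps_to hcard hmaps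
    have main : ∀ i j : ℕ, i ∈ Finset.Icc 1 (k + 1) → j ∈ Finset.Icc 1 (k + 1) →
        i < j → Q i = Q j → False := by
      intro i j hi hj hlt hQeq
      have hqp : (Q i).Prime := hQp i hi
      have hqa : Q i ∣ a := hQa i hi
      have hv_i := hQv i hi
      have hv_j := hQv j hj
      rw [← hQeq] at hv_j
      rw [Finset.mem_Icc] at hi hj
      set q := Q i with hqdef
      set e := i * a.factorization q + 1 with he
      have hciz : c a b i < z := hclt i hi.2
      have hcjz : c a b j < z := hclt j hj.2
      have h1 : q ^ e ∣ z - c a b i :=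
        (Nat.Prime.pow_dvd_iff_le_factorization hqp (by omega)).mpr hv_i
      have hele : e ≤ j * a.factorization q + 1 := by
        have : i * a.factorization q ≤ j * a.factorization q :=
          Nat.mul_le_mul_right _ hlt.le
        omega
      have h2 : q ^ e ∣ z - c a b j :=
        (Nat.Prime.pow_dvd_iff_le_factorization hqp (by omega)).mpr (le_trans hele hv_j)
      have hcij : c a b i ≤ c a b j := c_mono a b hlt.le
      have h3 : q ^ e ∣ c a b j - c a b i := by
        have hd := Nat.dvd_sub h1 h2
        have heq2 : (z - c a b i) - (z - c a b j) = c a b j - c a b i := by omega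
        rwa [heq2] at hd
      have h4 : c a b j - c a b i = a ^ i * c a b (j - i) := by
        have := c_add a b i (j - i)
        rw [Nat.add_sub_cancel' hlt.le] at this
        omega
      rw [h4] at h3
      have hqc : ¬ q ∣ c a b (j - i) := by
        intro hdvd
        have hji : 1 ≤ j - i := by omega
        have hc' : c a b (j - i) = a * c a b (j - i - 1) + b := by
          have hh := c_add a b 1 (j - i - 1)
          rw [c_one] at hh
          have : 1 + (j - i - 1) = j - i := by omega
          rw [this] at hh
          rw [hh, pow_one]
        have hqac : q ∣ a * c a b (j - i - 1) := hqa.mul_right _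
        rw [hc'] at hdvd
        have hqb : q ∣ b := (Nat.dvd_add_right hqac).mp hdvd
        have hg : q ∣ Nat.gcd a b := Nat.dvd_gcd hqa hqb
        rw [hab] at hg
        exact hqp.one_lt.ne' (Nat.eq_one_of_dvd_one hg)
      have hcop : Nat.Coprime (q ^ e) (c a b (j - i)) :=
        Nat.Coprime.pow_left _ ((Nat.Prime.coprime_iff_not_dvd hqp).mpr hqc)
      have h5 : q ^ e ∣ a ^ i := hcop.dvd_of_dvd_mul_right h3
      have h6 : e ≤ (a ^ i).factorization q :=
        (Nat.Prime.pow_dvd_iff_le_factorization hqp (by positivity)).mp h5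
      rw [Nat.factorization_pow] at h6
      simp only [Finsupp.smul_apply, smul_eq_mul] at h6
      omega
    rcases lt_or_gt_of_ne hij with h' | h'
    · exact main i j hi hj h' hQeq
    · exact main j i hj hi h' hQeq.symm
end

section
/- Let a, b be positive integers with a > 1 and gcd(a,b)=1, and define s_n = z - b*(a^n - 1)/(a-1) for a positive integer z. If all prime factors of s_i and s_{i+1} divide a and ν_p(s_{i+1}) ≥ ν_p(s_i) for every prime p dividing a (with s_i, s_{i+1} positive), then s_i divides s_{i+1}, and hence s_i divides a^i * b and z ≤ b*(a^{i+1} - 1)/(a - 1). -/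
lemma s_eq_geom (a b z : ℕ) (ha : 1 < a) (n : ℕ) :
    s a b z n = (z : ℤ) - (b : ℤ) * ∑ k ∈ Finset.range n, (a : ℤ) ^ k := by
  have h1 : ((a : ℤ) - 1) ≠ 0 := by
    have : (1 : ℤ) < (a : ℤ) := by exact_mod_cast ha
    omega
  have hg : (∑ k ∈ Finset.range n, (a : ℤ) ^ k) * ((a : ℤ) - 1) = (a : ℤ) ^ n - 1 :=
    geom_sum_mul _ _
  have : ((a : ℤ) ^ n - 1) / ((a : ℤ) - 1) = ∑ k ∈ Finset.range n, (a : ℤ) ^ k := by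
    rw [← hg, Int.mul_ediv_cancel _ h1]
  rw [s, this]

theorem s_dvd_succ_of_all_factors_dvd (a b z : ℕ) (ha : 1 < a) (hb : 0 < b)
    (hz : 0 < z) (hab : Nat.gcd a b = 1) (i : ℕ) (hi : 1 ≤ i)
    (hpos : 0 < s a b z i) (hpos1 : 0 < s a b z (i + 1))
    (hfac : ∀ p : ℕ, p.Prime → (p : ℤ) ∣ s a b z i → p ∣ a)
    (hfac1 : ∀ p : ℕ, p.Prime → (p : ℤ) ∣ s a b z (i + 1) → p ∣ a)
    (hval : ∀ p : ℕ, p.Prime → p ∣ a →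
      padicValInt p (s a b z i) ≤ padicValInt p (s a b z (i + 1))) :
    s a b z i ∣ s a b z (i + 1) ∧ s a b z i ∣ ((a : ℤ) ^ i * b) ∧
      (z : ℤ) ≤ (b : ℤ) * (((a : ℤ) ^ (i + 1) - 1) / ((a : ℤ) - 1)) := by
  set m := (s a b z i).natAbs with hm
  set n := (s a b z (i + 1)).natAbs with hn
  have hm0 : m ≠ 0 := by
    simp only [hm, Int.natAbs_ne_zero]; omega
  have hn0 : n ≠ 0 := by
    simp only [hn, Int.natAbs_ne_zero]; omega
  have hmn : m ∣ n := by
    rw [← Nat.factorization_le_iff_dvd hm0 hn0]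
    intro p
    by_cases hp : p.Prime
    · rw [Nat.factorization_def _ hp, Nat.factorization_def _ hp]
      by_cases hpa : p ∣ a
      · simpa [padicValInt] using hval p hp hpa
      · have : ¬ p ∣ m := fun hdvd => hpa <| hfac p hp <|
          Int.dvd_natAbs.mp (Int.natCast_dvd_natCast.mpr hdvd)
        rw [padicValNat.eq_zero_of_not_dvd this]
        exact Nat.zero_le _
    · simp [Nat.factorization_eq_zero_of_not_prime _ hp]
  have hdvd : s a b z i ∣ s a b z (i + 1) := by
    rwa [← Int.natAbs_dvd_natAbs]
  refine ⟨hdvd, ?_, ?_⟩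
  · have hdiff : s a b z i - s a b z (i + 1) = (a : ℤ) ^ i * b := by
      rw [s_eq_geom a b z ha, s_eq_geom a b z ha, Finset.sum_range_succ]
      ring
    have := dvd_sub (dvd_refl (s a b z i)) hdvd
    rwa [hdiff] at this
  · have hdiff : s a b z i - s a b z (i + 1) = (a : ℤ) ^ i * b := by
      rw [s_eq_geom a b z ha, s_eq_geom a b z ha, Finset.sum_range_succ]
      ring
    have hdvd2 : s a b z i ∣ (a : ℤ) ^ i * b := by
      have := dvd_sub (dvd_refl (s a b z i)) hdvd
      rwa [hdiff] at this
    have hle : s a b z i ≤ (a : ℤ) ^ i * b := by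
      refine Int.le_of_dvd ?_ hdvd2
      positivity
    have := s_eq_geom a b z ha (i + 1)
    rw [s] at this
    have h2 : (b : ℤ) * (((a : ℤ) ^ (i + 1) - 1) / ((a : ℤ) - 1)) =
        (b : ℤ) * ∑ k ∈ Finset.range (i + 1), (a : ℤ) ^ k := by omega
    rw [h2, Finset.sum_range_succ, mul_add]
    have h3 := s_eq_geom a b z ha i
    rw [s] at h3
    nlinarith [hle, h3]
end
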